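/- There is a constant c > 0 such that for all integers m ≥ 2 and n ≥ max(m,3), each of the following three partial functions can be simulated through n-colorings by a finite simple graph with at most c·n² vertices and at most c·n³ edges: (1) the total function ch_m : S → S^m with ch_m(i) = the 0-1 vector having 1 in position i and 0 elsewhere; (2) the partial function ps_m : S^m ⇀ S defined exactly on the vectors u that equal the 0-1 vector with a single 1 in some position i, with ps_m(u) = i; (3) the partial function xp_m : S ⇀ S^m with xp_m(0) = (0,0,...,0), xp_m(1) = (1,1,...,1), and xp_m undefined on all other elements of S. -/

import Mathlib

/-- A proper `n`-coloring of a simple graph: adjacent vertices get different colors. -/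
def IsProperColoring {V : Type} (G : SimpleGraph V) {n : ℕ} (σ : V → Fin n) : Prop :=
  ∀ ⦃u v : V⦄, G.Adj u v → σ u ≠ σ v

/-- The graph `G`, with input vertices `x`, output vertices `y` and reference vertices `r`,
simulates the partial function `φ : S^p ⇀ S^q` (encoded via `Option`) through `n`-colorings,
where `S = {0,…,m-1}` is identified with the first `m` colors of `C = {0,…,n-1}`. -/
def Simulates {V : Type} (G : SimpleGraph V) (m n : ℕ) {p q : ℕ}
    (φ : (Fin p → Fin m) → Option (Fin q → Fin m))
    (x : Fin p → V) (y : Fin q → V) (r : Fin n → V) : Prop :=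
  Function.Injective r ∧
  (∃ σ : V → Fin n, IsProperColoring G σ) ∧
  (∀ σ : V → Fin n, IsProperColoring G σ → Function.Injective fun i => σ (r i)) ∧
  ∀ a : Fin p → Fin n,
    ((∃ σ : V → Fin n, IsProperColoring G σ ∧ (∀ i, σ (r i) = i) ∧ ∀ j, σ (x j) = a j) ↔
      ∃ a' : Fin p → Fin m, (∀ j, (a j : ℕ) = (a' j : ℕ)) ∧ (φ a').isSome) ∧
    (∀ σ τ : V → Fin n, IsProperColoring G σ → IsProperColoring G τ →
      (∀ i, σ (r i) = i) → (∀ i, τ (r i) = i) →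
      (∀ j, σ (x j) = a j) → (∀ j, τ (x j) = a j) → σ = τ) ∧
    (∀ σ : V → Fin n, IsProperColoring G σ → (∀ i, σ (r i) = i) → (∀ j, σ (x j) = a j) →
      ∀ (a' : Fin p → Fin m) (b : Fin q → Fin m),
        (∀ j, (a j : ℕ) = (a' j : ℕ)) → φ a' = some b →
        ∀ k, (σ (y k) : ℕ) = (b k : ℕ))

/-!
Every gadget vertex is joined to all references outside a list of allowed colors, so once the
references carry the colors `0, …, n-1` a coloring of the gadget is a list coloring, and a helper
vertex with list `{c, d}` joined to `u` and `v` forbids exactly `{σ u, σ v} = {c, d}`.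

For `ch_m` and `ps_m` one gadget serves both. It has a vertex `sym` with list `{0, …, m-1}`, bits
`bit i` with list `{0, 1}` and, for `i ≠ j`, a vertex `select i j` colored `i` or `j` according
as `bit i` is `1` or `0`. A helper `link i j` with list `{i, j}` joined to `sym` and `select i j`
makes `sym = i` force `bit i = 1` and `sym = j` force `bit i = 0`; hence the list colorings are
parametrized by the color `s` of `sym`, with `bit` the unit vector `e_s`. For `xp_m` the path
`inp – neg – out k` copies a bit to all outputs. Both gadgets have at most `O(m²)` vertices,
each joined to at most `n` references and two gadget vertices, whence `O(n²)` vertices and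
`O(n³)` edges.
-/

namespace ListGadget

variable (n : ℕ) {A : Type} (L : A → Finset ℕ) (N : A → Finset A)

def Rel : Fin n ⊕ A → Fin n ⊕ A → Prop
  | .inl _, .inl _ => True
  | .inr t, .inl k => (k : ℕ) ∉ L t
  | .inr t, .inr u => u ∈ N t
  | .inl _, .inr _ => False

def graph : SimpleGraph (Fin n ⊕ A) :=
  SimpleGraph.fromRel (Rel n L N)

structure IsListColoring (τ : A → ℕ) : Prop where
  mem : ∀ t, τ t ∈ L t
  ne : ∀ t, ∀ u ∈ N t, τ t ≠ τ u

variable {n L N}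

theorem injective_ref {σ : Fin n ⊕ A → Fin n} (hσ : IsProperColoring (graph n L N) σ) :
    Function.Injective fun k => σ (.inl k) := by
  intro i j h
  by_contra hij
  exact hσ (by simp [graph, Rel, hij]) h

theorem isProperColoring_iff (hN : ∀ t, t ∉ N t) {σ : Fin n ⊕ A → Fin n}
    (hσ : ∀ k, σ (.inl k) = k) :
    IsProperColoring (graph n L N) σ ↔ IsListColoring L N fun t => (σ (.inr t) : ℕ) := by
  constructor
  · intro h
    refine ⟨fun t => ?_, fun t u hu => ?_⟩
    · by_contra ht
      exact h (u := .inr t) (v := .inl (σ (.inr t))) (by simp [graph, Rel, ht]) (hσ _).symm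
    · have htu : t ≠ u := fun e => hN t (e ▸ hu)
      exact Fin.val_injective.ne <| h (by simp [graph, Rel, hu, htu])
  · intro h
    have hrel : ∀ u v, u ≠ v → Rel n L N u v → σ u ≠ σ v := by
      rintro (i | t) (j | u) hne huv heq
      · exact hne (congrArg Sum.inl (by simpa [hσ] using heq))
      · exact huv
      · exact huv (by rw [← hσ j, ← heq]; exact h.mem t)
      · exact h.ne t u huv (congrArg Fin.val heq)
    intro u v huv
    rw [graph, SimpleGraph.fromRel_adj] at huv
    obtain ⟨hne, huv | hvu⟩ := huv
    · exact hrel u v hne huv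
    · exact (hrel v u hne.symm hvu).symm

theorem simulates_of_isListColoring {m p q : ℕ} (hL : ∀ t, ∀ k ∈ L t, k < n) (hN : ∀ t, t ∉ N t)
    {φ : (Fin p → Fin m) → Option (Fin q → Fin m)} {x : Fin p → A} {y : Fin q → A}
    (hne : ∃ τ, IsListColoring L N τ)
    (hdom : ∀ a : Fin p → ℕ, (∃ τ, IsListColoring L N τ ∧ ∀ j, τ (x j) = a j) ↔
      ∃ a' : Fin p → Fin m, (∀ j, a j = a' j) ∧ (φ a').isSome)
    (huniq : ∀ τ τ', IsListColoring L N τ → IsListColoring L N τ' →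
      (∀ j, τ (x j) = τ' (x j)) → τ = τ')
    (hout : ∀ τ, IsListColoring L N τ → ∀ a' b, (∀ j, τ (x j) = a' j) → φ a' = some b →
      ∀ k, τ (y k) = b k) :
    Simulates (graph n L N) m n φ (fun j => .inr (x j)) (fun k => .inr (y k)) .inl := by
  have extend : ∀ τ (hτ : IsListColoring L N τ), IsProperColoring (graph n L N)
      (Sum.elim id fun t => ⟨τ t, hL t _ (hτ.mem t)⟩) := fun τ hτ =>
    (isProperColoring_iff hN fun _ => rfl).2 hτ
  refine ⟨Sum.inl_injective, ?_, fun σ hσ => injective_ref hσ, fun a => ⟨?_, ?_, ?_⟩⟩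
  · obtain ⟨τ, hτ⟩ := hne
    exact ⟨_, extend τ hτ⟩
  · rw [← hdom]
    constructor
    · rintro ⟨σ, hσ, hr, hx⟩
      exact ⟨_, (isProperColoring_iff hN hr).1 hσ, fun j => by simp [hx]⟩
    · rintro ⟨τ, hτ, hx⟩
      exact ⟨_, extend τ hτ, fun _ => rfl, fun j => Fin.ext (hx j)⟩
  · intro σ σ' hσ hσ' hr hr' hx hx'
    have := huniq _ _ ((isProperColoring_iff hN hr).1 hσ) ((isProperColoring_iff hN hr').1 hσ')
      (fun j => by simp [hx, hx'])
    funext v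
    rcases v with k | t
    · rw [hr, hr']
    · exact Fin.ext (congrFun this t)
  · intro σ hσ hr hx a' b ha hb k
    exact hout _ ((isProperColoring_iff hN hr).1 hσ) a' b (fun j => by simp [hx, ha]) hb k

theorem card_edgeSet_le [Fintype A] {d : ℕ} (hN : ∀ t, (N t).card ≤ d) :
    Nat.card (graph n L N).edgeSet ≤ n * n + Fintype.card A * (n + d) := by
  let f : (Fin n × Fin n) ⊕ (A × Fin n) ⊕ (Σ t, N t) → Sym2 (Fin n ⊕ A) :=
    Sum.elim (fun p => s(.inl p.1, .inl p.2))
      (Sum.elim (fun p => s(.inr p.1, .inl p.2)) fun p => s(.inr p.1, .inr p.2.1))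
  have hrel : ∀ u v, Rel n L N u v → s(u, v) ∈ Set.range f := by
    rintro (i | t) (j | u) huv
    · exact ⟨.inl (i, j), rfl⟩
    · exact huv.elim
    · exact ⟨.inr (.inl (t, j)), rfl⟩
    · exact ⟨.inr (.inr ⟨t, u, huv⟩), rfl⟩
  have hsub : (graph n L N).edgeSet ⊆ Set.range f := by
    intro e he
    induction e using Sym2.ind with
    | _ u v =>
      rw [SimpleGraph.mem_edgeSet, graph, SimpleGraph.fromRel_adj] at he
      obtain ⟨-, huv | hvu⟩ := he
      · exact hrel u v huv
      · exact Sym2.eq_swap ▸ hrel v u hvu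
  calc Nat.card (graph n L N).edgeSet
      ≤ Nat.card (Set.range f) := Nat.card_mono (Set.toFinite _) hsub
    _ ≤ Nat.card ((Fin n × Fin n) ⊕ (A × Fin n) ⊕ (Σ t, N t)) := Finite.card_range_le f
    _ = n * n + (Fintype.card A * n + ∑ t, (N t).card) := by
      simp [Nat.card_eq_fintype_card]
    _ ≤ n * n + (Fintype.card A * n + ∑ _t : A, d) := by gcongr with t; exact hN t
    _ = n * n + Fintype.card A * (n + d) := by simp [mul_add]

end ListGadget

namespace OneHot

inductive Vertex (m : ℕ) : Type where
  | sym : Vertex m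
  | bit (i : Fin m) : Vertex m
  | neg (i : Fin m) : Vertex m
  | select (i j : Fin m) (h : (i : ℕ) ≠ j) : Vertex m
  | guardOne (i j : Fin m) (h : (i : ℕ) ≠ j) : Vertex m
  | guardZero (i j : Fin m) (h : (i : ℕ) ≠ j) : Vertex m
  | link (i j : Fin m) (h : (i : ℕ) ≠ j) : Vertex m
deriving DecidableEq, Fintype

open Vertex

variable {m n : ℕ}

-- `guardOne i j` forbids `bit i = 1 ∧ select i j = j` and `guardZero i j` forbids
-- `bit i = 0 ∧ select i j = i`. Where the list `{1, j}`, resp. `{0, i}`, would collapse, they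
-- watch `neg i = 1 - bit i` through the list `{0, 1}` instead.
def lists : Vertex m → Finset ℕ
  | sym => Finset.range m
  | bit _ | neg _ => {0, 1}
  | select i j _ | link i j _ => {(i : ℕ), (j : ℕ)}
  | guardOne _ j _ => if (j : ℕ) = 1 then {0, 1} else {1, (j : ℕ)}
  | guardZero i _ _ => if (i : ℕ) = 0 then {0, 1} else {0, (i : ℕ)}

def nbrs : Vertex m → Finset (Vertex m)
  | sym | bit _ | select _ _ _ => ∅
  | neg i => {bit i}
  | guardOne i j h => {if (j : ℕ) = 1 then neg i else bit i, select i j h}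
  | guardZero i j h => {if (i : ℕ) = 0 then neg i else bit i, select i j h}
  | link i j h => {sym, select i j h}

def coloring (s : ℕ) : Vertex m → ℕ
  | sym => s
  | bit i => if (i : ℕ) = s then 1 else 0
  | neg i => if (i : ℕ) = s then 0 else 1
  | select i j _ => if (i : ℕ) = s then i else j
  | guardOne i j _ => if (i : ℕ) = s then j else if (j : ℕ) = 1 then 0 else 1
  | guardZero i _ _ => if (i : ℕ) = s then (if (i : ℕ) = 0 then 1 else 0) else i
  | link i j _ => if (i : ℕ) = s then j else i

open ListGadget

theorem isListColoring_coloring {s : ℕ} (hs : s < m) :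
    IsListColoring lists nbrs (coloring (m := m) s) := by
  constructor
  · intro t
    cases t <;> simp only [lists, coloring] <;> (try split_ifs) <;> simp <;> omega
  · intro t u hu
    cases t <;> simp only [nbrs] at hu <;> (try split_ifs at hu) <;> simp at hu <;>
      rcases hu with rfl | rfl <;> simp only [coloring] <;> split_ifs <;> omega

section

variable {τ : Vertex m → ℕ} (hτ : IsListColoring lists nbrs τ)
include hτ

theorem bit_le_one (i : Fin m) : τ (bit i) ≤ 1 := by
  simpa [lists, Nat.le_one_iff_eq_zero_or_eq_one] using hτ.mem (bit i)

theorem neg_eq (i : Fin m) : τ (neg i) = 1 - τ (bit i) := by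
  have hn := hτ.mem (neg i)
  have hnb := hτ.ne (neg i) (bit i) (by simp [nbrs])
  have := bit_le_one hτ i
  simp [lists] at hn
  omega

theorem select_ne_of_bit_eq_one {i j : Fin m} (h : (i : ℕ) ≠ j) (hb : τ (bit i) = 1) :
    τ (select i j h) ≠ j := by
  have hg := hτ.mem (guardOne i j h)
  have hgn := hτ.ne (guardOne i j h)
  have := neg_eq hτ i
  by_cases hj : (j : ℕ) = 1 <;> simp [lists, nbrs, hj] at hg hgn <;> omega

theorem select_ne_of_bit_eq_zero {i j : Fin m} (h : (i : ℕ) ≠ j) (hb : τ (bit i) = 0) :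
    τ (select i j h) ≠ i := by
  have hg := hτ.mem (guardZero i j h)
  have hgn := hτ.ne (guardZero i j h)
  have := neg_eq hτ i
  by_cases hi : (i : ℕ) = 0 <;> simp [lists, nbrs, hi] at hg hgn <;> omega

theorem select_eq {i j : Fin m} (h : (i : ℕ) ≠ j) :
    τ (select i j h) = if τ (bit i) = 1 then i else j := by
  have ht := hτ.mem (select i j h)
  have h1 := select_ne_of_bit_eq_one hτ h
  have h0 := select_ne_of_bit_eq_zero hτ h
  have := bit_le_one hτ i
  simp [lists] at ht
  split_ifs <;> omega

theorem select_eq_sym {i j : Fin m} (h : (i : ℕ) ≠ j) (hs : τ sym = i ∨ τ sym = j) :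
    τ (select i j h) = τ sym := by
  have hl := hτ.mem (link i j h)
  have hln := hτ.ne (link i j h)
  have ht := hτ.mem (select i j h)
  simp [lists, nbrs] at hl hln ht
  omega

theorem sym_lt : τ sym < m := by
  simpa [lists] using hτ.mem sym

theorem bit_eq (hm : 2 ≤ m) (i : Fin m) : τ (bit i) = if (i : ℕ) = τ sym then 1 else 0 := by
  have := bit_le_one hτ i
  split_ifs with hi
  · obtain ⟨j, hji⟩ := Fintype.exists_ne_of_one_lt_card (by simp; omega) i
    have hj : (i : ℕ) ≠ j := Fin.val_ne_of_ne hji.symm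
    have h1 := select_eq hτ hj
    have h2 := select_eq_sym hτ hj (.inl hi.symm)
    split_ifs at h1 <;> omega
  · have hs := sym_lt hτ
    have hj : (i : ℕ) ≠ (⟨τ sym, hs⟩ : Fin m) := hi
    have h1 := select_eq hτ hj
    have h2 := select_eq_sym hτ hj (.inr rfl)
    split_ifs at h1 <;> omega

theorem eq_coloring (hm : 2 ≤ m) : τ = coloring (τ sym) := by
  funext t
  have hb := bit_eq hτ hm
  have hn := neg_eq hτ
  have hmem := hτ.mem t
  have hne := hτ.ne t
  cases t with
  | sym => rfl
  | bit i => exact hb i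
  | neg i => simp only [coloring, hn, hb]; split_ifs <;> rfl
  | select i j h => by_cases hi : (i : ℕ) = τ sym <;> simp [coloring, select_eq hτ h, hb, hi]
  | guardOne i j h =>
    have := hb i; have := select_eq hτ h
    by_cases hj : (j : ℕ) = 1 <;> simp [lists, nbrs, coloring, hj, hn] at hmem hne ⊢ <;>
      split_ifs at * <;> omega
  | guardZero i j h =>
    have := hb i; have := select_eq hτ h
    by_cases hi : (i : ℕ) = 0 <;> simp [lists, nbrs, coloring, hi, hn] at hmem hne ⊢ <;>
      split_ifs at * <;> omega
  | link i j h =>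
    have := hb i; have := select_eq hτ h
    simp [lists, nbrs, coloring] at hmem hne ⊢
    split_ifs at * <;> omega

end

theorem isListColoring_iff (hm : 2 ≤ m) {τ : Vertex m → ℕ} :
    IsListColoring lists nbrs τ ↔ ∃ s < m, τ = coloring s :=
  ⟨fun hτ => ⟨_, sym_lt hτ, eq_coloring hτ hm⟩, fun ⟨_, hs, h⟩ => h ▸ isListColoring_coloring hs⟩

theorem lt_of_mem_lists (hm : 2 ≤ m) (hmn : m ≤ n) (t : Vertex m) : ∀ k ∈ lists t, k < n := by
  cases t <;> simp only [lists] <;> (try split_ifs) <;> simp <;> omega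

theorem notMem_nbrs (t : Vertex m) : t ∉ nbrs t := by
  cases t <;> simp only [nbrs] <;> (try split_ifs) <;> simp

theorem card_nbrs_le (t : Vertex m) : (nbrs t).card ≤ 2 := by
  cases t <;> simp only [nbrs] <;> (try split_ifs) <;> simp

theorem simulates_ch (hm : 2 ≤ m) (hmn : m ≤ n) :
    Simulates (graph n lists nbrs) m n
      (fun a : Fin 1 → Fin m => some fun i : Fin m =>
        if (i : ℕ) = (a 0 : ℕ) then (⟨1, by omega⟩ : Fin m) else ⟨0, by omega⟩)
      (fun _ => .inr sym) (fun i => .inr (bit i)) .inl := by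
  apply ListGadget.simulates_of_isListColoring (lt_of_mem_lists hm hmn) notMem_nbrs
    ⟨_, isListColoring_coloring (by omega : 0 < m)⟩
  all_goals simp only [isListColoring_iff hm]
  · intro a
    constructor
    · rintro ⟨_, ⟨s, hs, rfl⟩, h⟩
      exact ⟨fun _ => ⟨s, hs⟩, fun j => (h j).symm, rfl⟩
    · rintro ⟨a', ha, -⟩
      refine ⟨_, ⟨a' 0, (a' 0).isLt, rfl⟩, fun j => ?_⟩
      rw [Subsingleton.elim j 0, ha]
      rfl
  · rintro _ _ ⟨s, -, rfl⟩ ⟨s', -, rfl⟩ h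
    exact congrArg coloring (h 0)
  · rintro _ ⟨s, -, rfl⟩ a' b h hb k
    cases hb
    have : s = a' 0 := h 0
    simp only [coloring]
    split_ifs <;> simp_all

theorem simulates_ps (hm : 2 ≤ m) (hmn : m ≤ n) :
    Simulates (graph n lists nbrs) m n
      (fun u : Fin m → Fin m =>
        if h : ∃ i : Fin m, ∀ j : Fin m, (u j : ℕ) = if j = i then 1 else 0 then
          some fun _ : Fin 1 => h.choose
        else none)
      (fun j => .inr (bit j)) (fun _ => .inr sym) .inl := by
  apply ListGadget.simulates_of_isListColoring (lt_of_mem_lists hm hmn) notMem_nbrs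
    ⟨_, isListColoring_coloring (by omega : 0 < m)⟩
  all_goals simp only [isListColoring_iff hm]
  · intro a
    constructor
    · rintro ⟨_, ⟨s, hs, rfl⟩, h⟩
      refine ⟨fun j => if (j : ℕ) = s then ⟨1, by omega⟩ else ⟨0, by omega⟩, fun j => ?_, ?_⟩
      · rw [← h j]
        simp only [coloring]
        split_ifs <;> rfl
      · rw [dif_pos ⟨⟨s, hs⟩, fun j => by simp [Fin.ext_iff]; split_ifs <;> rfl⟩]
        rfl
    · rintro ⟨a', ha, hsome⟩
      split_ifs at hsome with hunit
      · obtain ⟨i, hi⟩ := hunit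
        refine ⟨_, ⟨i, i.isLt, rfl⟩, fun j => ?_⟩
        rw [ha, hi]
        simp [coloring, Fin.ext_iff]
      · exact absurd hsome (by simp)
  · rintro _ _ ⟨s, hs, rfl⟩ ⟨s', hs', rfl⟩ h
    have := h ⟨s, hs⟩
    simp only [coloring] at this
    split_ifs at this <;> simp_all
  · rintro _ ⟨s, hs, rfl⟩ a' b h hb k
    split_ifs at hb with hunit
    cases hb
    have hi := hunit.choose_spec ⟨s, hs⟩
    rw [← h] at hi
    have hchoose : (⟨s, hs⟩ : Fin m) = hunit.choose := by
      by_contra hne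
      simp [coloring, hne] at hi
    simp [coloring, ← hchoose]

def code : Vertex m → Option (Fin 6 × Fin m × Fin m)
  | sym => none
  | bit i => some (0, i, i)
  | neg i => some (1, i, i)
  | select i j _ => some (2, i, j)
  | guardOne i j _ => some (3, i, j)
  | guardZero i j _ => some (4, i, j)
  | link i j _ => some (5, i, j)

theorem code_injective : Function.Injective (code (m := m)) := by
  intro a b h
  cases a <;> cases b <;> simp_all [code]

theorem card_vertex_le (hmn : m ≤ n) : Fintype.card (Vertex m) ≤ 6 * n ^ 2 + 1 := by
  have := Fintype.card_le_of_injective _ (code_injective (m := m))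
  simp only [Fintype.card_option, Fintype.card_prod, Fintype.card_fin] at this
  nlinarith

theorem card_le (hn : 0 < n) (hmn : m ≤ n) : Nat.card (Fin n ⊕ Vertex m) ≤ 12 * n ^ 2 := by
  rw [Nat.card_eq_fintype_card, Fintype.card_sum, Fintype.card_fin]
  nlinarith [card_vertex_le hmn]

theorem card_edgeSet_le (h3 : 3 ≤ n) (hmn : m ≤ n) :
    Nat.card (graph n lists (nbrs (m := m))).edgeSet ≤ 12 * n ^ 3 :=
  calc _ ≤ n * n + Fintype.card (Vertex m) * (n + 2) := ListGadget.card_edgeSet_le card_nbrs_le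
    _ ≤ n * n + (6 * n ^ 2 + 1) * (n + 2) := by gcongr; exact card_vertex_le hmn
    _ ≤ 12 * n ^ 3 := by nlinarith

end OneHot

namespace Broadcast

inductive Vertex (m : ℕ) : Type where
  | inp : Vertex m
  | neg : Vertex m
  | out (k : Fin m) : Vertex m
deriving DecidableEq, Fintype

open Vertex ListGadget

variable {m n : ℕ}

def lists (_ : Vertex m) : Finset ℕ := {0, 1}

def nbrs : Vertex m → Finset (Vertex m)
  | inp => ∅
  | neg => {inp}
  | out _ => {neg}

def coloring (s : ℕ) : Vertex m → ℕ
  | inp | out _ => s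
  | neg => 1 - s

theorem isListColoring_iff {τ : Vertex m → ℕ} :
    IsListColoring lists nbrs τ ↔ ∃ s < 2, τ = coloring s := by
  constructor
  · intro hτ
    have hmem : ∀ t, τ t = 0 ∨ τ t = 1 := by simpa [lists] using hτ.mem
    have hne := hτ.ne
    have h0 := hmem inp
    have h1 := hmem neg
    have h10 := hne neg inp (by simp [nbrs])
    refine ⟨τ inp, by omega, funext fun t => ?_⟩
    cases t with
    | inp => rfl
    | neg => simp only [coloring]; omega
    | out k =>
      have := hne (out k) neg (by simp [nbrs])
      have := hmem (out k)
      simp only [coloring]; omega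
  · rintro ⟨s, hs, rfl⟩
    constructor
    · intro t; cases t <;> simp [lists, coloring] <;> omega
    · intro t u hu; cases t <;> simp [nbrs] at hu <;> subst hu <;> simp [coloring] <;> omega

theorem simulates_xp (hm : 2 ≤ m) (hn : 2 ≤ n) :
    Simulates (graph n lists (nbrs (m := m))) m n
      (fun a : Fin 1 → Fin m =>
        if (a 0 : ℕ) = 0 then some fun _ : Fin m => (⟨0, by omega⟩ : Fin m)
        else if (a 0 : ℕ) = 1 then some fun _ : Fin m => (⟨1, by omega⟩ : Fin m)
        else none)
      (fun _ => .inr inp) (fun k => .inr (out k)) .inl := by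
  apply ListGadget.simulates_of_isListColoring (fun _ _ hk => by simp [lists] at hk; omega)
    (fun t => by cases t <;> simp [nbrs]) ⟨_, isListColoring_iff.2 ⟨0, by omega, rfl⟩⟩
  all_goals simp only [isListColoring_iff]
  · intro a
    constructor
    · rintro ⟨_, ⟨s, hs, rfl⟩, h⟩
      refine ⟨fun _ => ⟨s, by omega⟩, fun j => (h j).symm, ?_⟩
      interval_cases s <;> simp
    · rintro ⟨a', ha, hsome⟩
      refine ⟨_, ⟨a' 0, ?_, rfl⟩, fun j => ?_⟩
      · split_ifs at hsome <;> simp_all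
      · rw [Subsingleton.elim j 0, ha]; rfl
  · rintro _ _ ⟨s, -, rfl⟩ ⟨s', -, rfl⟩ h
    exact congrArg coloring (h 0)
  · rintro _ ⟨s, hs, rfl⟩ a' b h hb k
    have : s = a' 0 := h 0
    split_ifs at hb <;> cases hb <;> simp_all [coloring]

def code : Vertex m → Option (Option (Fin m))
  | inp => none
  | neg => some none
  | out k => some (some k)

theorem code_injective : Function.Injective (code (m := m)) := by
  intro a b h
  cases a <;> cases b <;> simp_all [code]

theorem card_vertex_le (hmn : m ≤ n) : Fintype.card (Vertex m) ≤ n + 2 := by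
  have := Fintype.card_le_of_injective _ (code_injective (m := m))
  simp only [Fintype.card_option, Fintype.card_fin] at this
  omega

theorem card_le (hn : 0 < n) (hmn : m ≤ n) : Nat.card (Fin n ⊕ Vertex m) ≤ 12 * n ^ 2 := by
  rw [Nat.card_eq_fintype_card, Fintype.card_sum, Fintype.card_fin]
  nlinarith [card_vertex_le hmn]

theorem card_edgeSet_le (hn : 0 < n) (hmn : m ≤ n) :
    Nat.card (graph n lists (nbrs (m := m))).edgeSet ≤ 12 * n ^ 3 :=
  have hnbrs (t : Vertex m) : (nbrs t).card ≤ 1 := by cases t <;> simp [nbrs]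
  calc _ ≤ n * n + Fintype.card (Vertex m) * (n + 1) := ListGadget.card_edgeSet_le hnbrs
    _ ≤ n * n + (n + 2) * (n + 1) := by gcongr; exact card_vertex_le hmn
    _ ≤ 12 * n ^ 3 := by nlinarith

end Broadcast

/-- There is a constant `c > 0` such that for all `m ≥ 2` and `n ≥ max(m,3)`, each of the
functions `ch_m : S → S^m` (characteristic 0-1 vector of `i`), `ps_m : S^m ⇀ S` (position
of the single 1 in a 0-1 unit vector, undefined elsewhere) and `xp_m : S ⇀ S^m`
(`0 ↦ (0,…,0)`, `1 ↦ (1,…,1)`, undefined elsewhere) can be simulated through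
`n`-colorings by a finite simple graph with at most `c·n²` vertices and `c·n³` edges. -/
theorem statement6 :
    ∃ c : ℕ, 0 < c ∧
      ∀ m n : ℕ, (hm : 2 ≤ m) → max m 3 ≤ n →
        -- ch_m
        (∃ (V : Type) (_ : Fintype V) (G : SimpleGraph V)
            (x : Fin 1 → V) (y : Fin m → V) (r : Fin n → V),
          Simulates G m n
            (fun a : Fin 1 → Fin m => some fun i : Fin m =>
              if (i : ℕ) = (a 0 : ℕ) then (⟨1, by omega⟩ : Fin m) else ⟨0, by omega⟩)
            x y r ∧
          Nat.card V ≤ c * n ^ 2 ∧ Nat.card G.edgeSet ≤ c * n ^ 3) ∧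
        -- ps_m
        (∃ (V : Type) (_ : Fintype V) (G : SimpleGraph V)
            (x : Fin m → V) (y : Fin 1 → V) (r : Fin n → V),
          Simulates G m n
            (fun u : Fin m → Fin m =>
              if h : ∃ i : Fin m, ∀ j : Fin m, (u j : ℕ) = if j = i then 1 else 0 then
                some fun _ : Fin 1 => h.choose
              else none)
            x y r ∧
          Nat.card V ≤ c * n ^ 2 ∧ Nat.card G.edgeSet ≤ c * n ^ 3) ∧
        -- xp_m
        (∃ (V : Type) (_ : Fintype V) (G : SimpleGraph V)
            (x : Fin 1 → V) (y : Fin m → V) (r : Fin n → V),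
          Simulates G m n
            (fun a : Fin 1 → Fin m =>
              if (a 0 : ℕ) = 0 then some fun _ : Fin m => (⟨0, by omega⟩ : Fin m)
              else if (a 0 : ℕ) = 1 then some fun _ : Fin m => (⟨1, by omega⟩ : Fin m)
              else none)
            x y r ∧
          Nat.card V ≤ c * n ^ 2 ∧ Nat.card G.edgeSet ≤ c * n ^ 3) := by
  refine ⟨12, by norm_num, fun m n hm hn => ?_⟩
  have h3 : 3 ≤ n := le_of_max_le_right hn
  have hmn : m ≤ n := le_of_max_le_left hn
  exact ⟨⟨_, inferInstance, _, _, _, _, OneHot.simulates_ch hm hmn,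
      OneHot.card_le (by omega) hmn, OneHot.card_edgeSet_le h3 hmn⟩,
    ⟨_, inferInstance, _, _, _, _, OneHot.simulates_ps hm hmn,
      OneHot.card_le (by omega) hmn, OneHot.card_edgeSet_le h3 hmn⟩,
    ⟨_, inferInstance, _, _, _, _, Broadcast.simulates_xp hm (by omega),
      Broadcast.card_le (by omega) hmn, Broadcast.card_edgeSet_le (by omega) hmn⟩⟩
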